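/- For generic x ∈ E^N and 0 ≤ k < q ≤ N, the total variation norm of the k-th derivative term satisfies ‖m(x)^{⊙q} D_{∂^k L_q}‖_tv = Σ_{p=q-k}^{q} |s(p,q-k)| · S(q,p), where s denotes signed Stirling numbers of the first kind and S Stirling numbers of the second kind. -/

import Mathlib

open MeasureTheory
open scoped ENNReal NNReal

/-- Unsigned Stirling numbers of the first kind. -/
def stirlingFstUnsigned : ℕ → ℕ → ℕ
  | 0, 0 => 1
  | 0, _ + 1 => 0
  | _ + 1, 0 => 0
  | n + 1, k + 1 => n * stirlingFstUnsigned n (k + 1) + stirlingFstUnsigned n k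

/-- Signed Stirling numbers of the first kind. -/
def stirlingFst (n k : ℕ) : ℤ := (-1) ^ (n - k) * stirlingFstUnsigned n k

/-- Stirling numbers of the second kind. -/
def stirlingSnd : ℕ → ℕ → ℕ
  | 0, 0 => 1
  | 0, _ + 1 => 0
  | _ + 1, 0 => 0
  | n + 1, k + 1 => (k + 1) * stirlingSnd n (k + 1) + stirlingSnd n k

/-!
After pushing forward, the signed measure is a combination of Dirac masses at the points
`x ∘ b ∘ a`, where the coefficient depends only on `p = #(image a)`. As `x` and `b` are
injective, two atoms coincide only if `b ∘ a = b' ∘ a'`, which forces `#(image a) = #(image a')`: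
coinciding atoms carry equal coefficients, so nothing cancels and the total variation is the sum
of the absolute values of all coefficients. There are `(q)_p S(q,p)` maps `a` with image of size
`p` and `(N)_q` embeddings `b`, which cancel the normalisations `1/(q)_p` and `1/(N)_q`.
-/

open Finset

namespace MeasureTheory

theorem Measure.toSignedMeasure_finset_sum {α ι : Type*} [MeasurableSpace α]
    (s : Finset ι) (μ : ι → Measure α) [∀ i, IsFiniteMeasure (μ i)] :
    (∑ i ∈ s, μ i).toSignedMeasure = ∑ i ∈ s, (μ i).toSignedMeasure := by
  classical
  induction s using Finset.induction_on with
  | empty => simp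
  | insert i s hi ih =>
    simp_rw [sum_insert hi]
    rw [Measure.toSignedMeasure_add, ih]

theorem Measure.toSignedMeasure_map_smul_sum_dirac {α β ι : Type*}
    [MeasurableSpace α] [MeasurableSpace β] {g : α → β} (hg : Measurable g) (r : ℝ≥0)
    (s : Finset ι) (y : ι → α) :
    ((r • ∑ i ∈ s, dirac (y i)).map g).toSignedMeasure =
      ∑ i ∈ s, (r : ℝ) • (dirac (g (y i))).toSignedMeasure := by
  have h_map : (r • ∑ i ∈ s, dirac (y i)).map g = r • ∑ i ∈ s, dirac (g (y i)) := by
    rw [Measure.map_smul, Measure.map_finset_sum hg.aemeasurable]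
    simp_rw [map_dirac' hg]
  rw [toSignedMeasure_congr h_map, toSignedMeasure_smul, toSignedMeasure_finset_sum, smul_sum]
  rfl

namespace SignedMeasure

variable {α ι : Type*} [MeasurableSpace α]

theorem totalVariation_univ_sum_smul_dirac_le (s : Finset ι) (c : ι → ℝ) (y : ι → α) :
    (∑ i ∈ s, c i • (Measure.dirac (y i)).toSignedMeasure).totalVariation Set.univ ≤
      ∑ i ∈ s, ‖c i‖ₑ := by
  rw [totalVariation_eq_variation]
  calc _ ≤ (∑ i ∈ s, (c i • (Measure.dirac (y i)).toSignedMeasure).variation) Set.univ :=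
        VectorMeasure.variation_finsetSum_le s _ Set.univ
    _ = ∑ i ∈ s, ‖c i‖ₑ := by simp [VectorMeasure.variation_smul, enorm_eq_nnnorm]

theorem sum_enorm_le_totalVariation_univ_sum_smul_dirac [MeasurableSingletonClass α]
    (s : Finset ι) (c : ι → ℝ) (y : ι → α) (h : ∀ i ∈ s, ∀ j ∈ s, y i = y j → c i = c j) :
    ∑ i ∈ s, ‖c i‖ₑ ≤
      (∑ i ∈ s, c i • (Measure.dirac (y i)).toSignedMeasure).totalVariation Set.univ := by
  classical
  set μ := ∑ i ∈ s, c i • (Measure.dirac (y i)).toSignedMeasure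
  have h_atom : ∀ z ∈ s.image y, ∑ i ∈ s with y i = z, ‖c i‖ₑ = ‖μ {z}‖ₑ := by
    intro z hz
    obtain ⟨i₀, hi₀, rfl⟩ := mem_image.1 hz
    have h_const : ∀ i ∈ s.filter (y · = y i₀), c i = c i₀ := fun i hi =>
      h i (mem_filter.1 hi).1 i₀ hi₀ (mem_filter.1 hi).2
    have h_mass : μ {y i₀} = ∑ i ∈ s with y i = y i₀, c i := by
      simp only [μ, FunLike.coe_sum, Finset.sum_apply, FunLike.coe_smul, Pi.smul_apply,
        Measure.toSignedMeasure_apply_measurable (measurableSet_singleton _), sum_filter]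
      refine sum_congr rfl fun i _ => ?_
      by_cases hi : y i = y i₀ <;> simp [hi, Measure.real]
    rw [h_mass, sum_congr rfl h_const, sum_congr rfl fun i hi => by rw [h_const i hi],
      sum_const, sum_const, nsmul_eq_mul, nsmul_eq_mul, enorm_mul]
    simp
  rw [← sum_fiberwise_of_maps_to fun i hi => mem_image_of_mem y hi, sum_congr rfl h_atom,
    ← sum_image (f := fun t => ‖μ t‖ₑ) fun _ _ _ _ h => Set.singleton_injective h,
    totalVariation_eq_variation]
  refine VectorMeasure.le_variation μ MeasurableSet.univ (fun _ _ => Set.subset_univ _) ?_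
  intro t ht t' ht' htt'
  obtain ⟨z, -, rfl⟩ := mem_image.1 ht
  obtain ⟨w, -, rfl⟩ := mem_image.1 ht'
  exact Set.disjoint_singleton.2 fun h => htt' (congrArg _ h)

theorem totalVariation_univ_sum_smul_dirac [MeasurableSingletonClass α]
    (s : Finset ι) (c : ι → ℝ) (y : ι → α) (h : ∀ i ∈ s, ∀ j ∈ s, y i = y j → c i = c j) :
    (∑ i ∈ s, c i • (Measure.dirac (y i)).toSignedMeasure).totalVariation Set.univ =
      ENNReal.ofReal (∑ i ∈ s, |c i|) := by
  rw [ENNReal.ofReal_sum_of_nonneg fun i _ => abs_nonneg (c i)]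
  simp_rw [← Real.enorm_eq_ofReal_abs]
  exact le_antisymm (totalVariation_univ_sum_smul_dirac_le s c y)
    (sum_enorm_le_totalVariation_univ_sum_smul_dirac s c y h)

end SignedMeasure

end MeasureTheory

theorem Fin.image_univ_cons {α : Type*} [DecidableEq α] {n : ℕ} (z : α) (g : Fin n → α) :
    univ.image (Fin.cons z g : Fin (n + 1) → α) = insert z (univ.image g) := by
  ext w
  simp [Fin.exists_fin_succ, eq_comm]

theorem card_filter_card_image_cons {m n : ℕ} (g : Fin n → Fin m) (p : ℕ) :
    #{z | #(univ.image (Fin.cons z g : Fin (n + 1) → Fin m)) = p + 1} =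
      (if #(univ.image g) = p + 1 then p + 1 else 0) +
        (if #(univ.image g) = p then m - p else 0) := by
  have h_mem : ∀ z ∈ univ.image g,
      #(univ.image (Fin.cons z g : Fin (n + 1) → Fin m)) = #(univ.image g) := fun z hz => by
    rw [Fin.image_univ_cons, card_insert_of_mem hz]
  have h_notMem : ∀ z ∈ (univ.image g)ᶜ,
      #(univ.image (Fin.cons z g : Fin (n + 1) → Fin m)) = #(univ.image g) + 1 := fun z hz => by
    rw [Fin.image_univ_cons, card_insert_of_notMem (mem_compl.1 hz)]
  rw [card_filter, ← sum_add_sum_compl (univ.image g),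
    sum_congr rfl (g := fun _ => if #(univ.image g) = p + 1 then 1 else 0)
      fun z hz => by rw [h_mem z hz],
    sum_congr (s₁ := (univ.image g)ᶜ) rfl
      (g := fun _ => if #(univ.image g) + 1 = p + 1 then 1 else 0)
      fun z hz => by rw [h_notMem z hz],
    sum_const, sum_const, card_compl, Fintype.card_fin]
  split_ifs <;> simp_all

theorem card_filter_card_image_eq_descFactorial_mul_stirlingSnd (m n p : ℕ) :
    #{f : Fin n → Fin m | #(univ.image f) = p} = m.descFactorial p * stirlingSnd n p := by
  induction n generalizing p with
  | zero => cases p <;> simp [stirlingSnd]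
  | succ n ih =>
    cases p with
    | zero =>
      simp only [stirlingSnd, mul_zero, card_eq_zero, filter_eq_empty_iff]
      exact fun f _ => (univ_nonempty.image f).ne_empty
    | succ p =>
      calc #{f : Fin (n + 1) → Fin m | #(univ.image f) = p + 1}
          = ∑ g : Fin n → Fin m,
              #{z | #(univ.image (Fin.cons z g : Fin (n + 1) → Fin m)) = p + 1} := by
            rw [card_filter, ← (Fin.consEquiv fun _ => Fin m).sum_comp, Fintype.sum_prod_type,
              sum_comm]
            simp_rw [card_filter]
            rfl
        _ = (p + 1) * #{g : Fin n → Fin m | #(univ.image g) = p + 1} +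
              (m - p) * #{g : Fin n → Fin m | #(univ.image g) = p} := by
            simp_rw [card_filter_card_image_cons, sum_add_distrib, ← sum_filter, sum_const,
              smul_eq_mul, mul_comm]
        _ = m.descFactorial (p + 1) * stirlingSnd (n + 1) (p + 1) := by
            rw [ih, ih, Nat.descFactorial_succ, stirlingSnd]
            ring

theorem card_image_univ_eq_of_comp_eq {α β γ : Type*} [Fintype α] [DecidableEq β]
    [DecidableEq γ] {a a' : α → β} {b b' : β ↪ γ} (h : ⇑b ∘ a = ⇑b' ∘ a') :
    #(univ.image a) = #(univ.image a') := by
  rw [← card_image_of_injective _ b.injective, ← card_image_of_injective _ b'.injective,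
    image_image, image_image, h]

theorem stmt_11_general {E : Type*} [MeasurableSpace E] [MeasurableSingletonClass E]
    (N q k : ℕ) (hqN : q ≤ N) (x : Fin N → E) (hx : Function.Injective x) :
    (∑ p ∈ Finset.Icc (q - k) q,
        ∑ a ∈ Finset.univ.filter
            (fun a : Fin q → Fin q => (Finset.univ.image a).card = p),
          ((stirlingFst p (q - k) : ℝ) / (q.descFactorial p : ℝ)) •
            (Measure.map (fun y : Fin q → E => y ∘ a)
                (((N.descFactorial q : ℝ≥0))⁻¹ •
                  ∑ b : Fin q ↪ Fin N,
                    Measure.dirac (fun i => x (b i)))).toSignedMeasure).totalVariation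
        Set.univ =
      ENNReal.ofReal
        (∑ p ∈ Finset.Icc (q - k) q,
          (|stirlingFst p (q - k)| : ℝ) * (stirlingSnd q p : ℝ)) := by
  set c : ℕ → ℝ := fun p =>
    (stirlingFst p (q - k) : ℝ) / q.descFactorial p * ((N.descFactorial q : ℝ≥0)⁻¹ : ℝ≥0)
  set I := (Icc (q - k) q).sigma fun p =>
    ({a : Fin q → Fin q | #(univ.image a) = p} : Finset _) ×ˢ (univ : Finset (Fin q ↪ Fin N))
  have h_fiber : ∀ i ∈ I, ∀ j ∈ I,
      (fun t => x (i.2.2 (i.2.1 t))) = (fun t => x (j.2.2 (j.2.1 t))) → c i.1 = c j.1 := by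
    rintro ⟨p, a, b⟩ hi ⟨p', a', b'⟩ hj h
    simp only [I, mem_sigma, mem_product, mem_filter] at hi hj
    simp only [← hi.2.1.2, ← hj.2.1.2, card_image_univ_eq_of_comp_eq (hx.comp_left h)]
  convert SignedMeasure.totalVariation_univ_sum_smul_dirac I _ _ h_fiber using 3
  · rw [sum_sigma]
    refine sum_congr rfl fun p _ => ?_
    rw [sum_product]
    refine sum_congr rfl fun a _ => ?_
    rw [Measure.toSignedMeasure_map_smul_sum_dirac (by fun_prop), smul_sum]
    simp_rw [smul_smul]
    rfl
  · rw [sum_sigma]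
    refine sum_congr rfl fun p hp => ?_
    have h_q : (q.descFactorial p : ℝ) ≠ 0 :=
      Nat.cast_ne_zero.2 (Nat.descFactorial_eq_zero_iff_lt.not.2 (mem_Icc.1 hp).2.not_gt)
    have h_N : (N.descFactorial q : ℝ) ≠ 0 :=
      Nat.cast_ne_zero.2 (Nat.descFactorial_eq_zero_iff_lt.not.2 hqN.not_gt)
    simp only [c, sum_const, card_product, card_filter_card_image_eq_descFactorial_mul_stirlingSnd,
      card_univ, Fintype.card_embedding_eq, Fintype.card_fin, nsmul_eq_mul, abs_mul, abs_div,
      abs_inv, Nat.abs_cast, NNReal.coe_inv, NNReal.coe_natCast]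
    push_cast
    field_simp

/-- For generic `x ∈ E^N` and `0 ≤ k < q ≤ N`,
`‖m(x)^{⊙q} D_{∂^k L_q}‖_tv = Σ_{p=q-k}^{q} |s(p,q-k)| · S(q,p)`, where
`∂^k L_q = Σ_{p=q-k}^q s(p,q-k)·(1/(q)_p)·Σ_{a ∈ [q]^[q]_p} a` acts on the restricted
empirical measure `m(x)^{⊙q}` by (linearly extended) pushforward `y ↦ y ∘ a`. -/
theorem stmt_11 {E : Type*} [MeasurableSpace E] [MeasurableSingletonClass E]
    (N q k : ℕ) (hk : k < q) (hqN : q ≤ N) (x : Fin N → E) (hx : Function.Injective x) :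
    (∑ p ∈ Finset.Icc (q - k) q,
        ∑ a ∈ Finset.univ.filter
            (fun a : Fin q → Fin q => (Finset.univ.image a).card = p),
          ((stirlingFst p (q - k) : ℝ) / (q.descFactorial p : ℝ)) •
            (Measure.map (fun y : Fin q → E => y ∘ a)
                (((N.descFactorial q : ℝ≥0))⁻¹ •
                  ∑ b : Fin q ↪ Fin N,
                    Measure.dirac (fun i => x (b i)))).toSignedMeasure).totalVariation
        Set.univ =
      ENNReal.ofReal
        (∑ p ∈ Finset.Icc (q - k) q,
          (|stirlingFst p (q - k)| : ℝ) * (stirlingSnd q p : ℝ)) :=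
  stmt_11_general N q k hqN x hx
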